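/- Let A be a partial approximation operator on L^c, let (c,d) be a stable fixpoint of A (hence A-prudent), and let (a,b) be A-reliable with (a,b) ≤_p (c,d). Then (c↓(b), c↑(a)) ≤_p (c,d). -/

import Mathlib

variable {L : Type*} [CompleteLattice L]

/-- The precision ordering on pairs of lattice elements:
`(x, y) ≤ₚ (x', y')` iff `x ≤ x'` and `y' ≤ y`. -/
def precLE (p q : L × L) : Prop := p.1 ≤ q.1 ∧ q.2 ≤ p.2

/-- A pair `(x, y)` is consistent if `x ≤ y`. -/
def ConsistentPair (p : L × L) : Prop := p.1 ≤ p.2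

/-- A partial approximation operator on the consistent pairs `L^c` of a complete
lattice `L`, given by its two component functions `A1`, `A2`.  It maps consistent
pairs to consistent pairs, is `≤ₚ`-monotone on consistent pairs, and has equal
components on the diagonal. -/
structure PartialApprox (L : Type*) [CompleteLattice L] where
  A1 : L → L → L
  A2 : L → L → L
  cons : ∀ x y : L, x ≤ y → A1 x y ≤ A2 x y
  mono1 : ∀ x y x' y' : L, x ≤ y → x' ≤ y' → x ≤ x' → y' ≤ y → A1 x y ≤ A1 x' y'
  mono2 : ∀ x y x' y' : L, x ≤ y → x' ≤ y' → x ≤ x' → y' ≤ y → A2 x' y' ≤ A2 x y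
  diag : ∀ x : L, A1 x x = A2 x x

namespace PartialApprox

/-- `(a, b)` is `A`-reliable if it is consistent and `(a, b) ≤ₚ A(a, b)`. -/
def reliable (A : PartialApprox L) (a b : L) : Prop :=
  a ≤ b ∧ a ≤ A.A1 a b ∧ A.A2 a b ≤ b

/-- The least fixpoint of `A.A1 (·, b)` on the interval `[⊥, b]`
(for `A`-reliable pairs this least fixpoint exists and equals this `sInf`). -/
def cdown (A : PartialApprox L) (b : L) : L :=
  sInf {z | z ≤ b ∧ A.A1 z b = z}

/-- The least fixpoint of `A.A2 (a, ·)` on the interval `[a, ⊤]`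
(for `A`-reliable pairs this least fixpoint exists and equals this `sInf`). -/
def cup (A : PartialApprox L) (a : L) : L :=
  sInf {z | a ≤ z ∧ A.A2 a z = z}

/-- `(a, b)` is `A`-prudent if it is `A`-reliable and `a ≤ c↓(b)`. -/
def prudent (A : PartialApprox L) (a b : L) : Prop :=
  A.reliable a b ∧ a ≤ A.cdown b

/-- `(x, y)` is a stable fixpoint of `A` if it is `A`-reliable, `x = c↓(y)`
and `y = c↑(x)`. -/
def stableFix (A : PartialApprox L) (x y : L) : Prop :=
  A.reliable x y ∧ x = A.cdown y ∧ y = A.cup x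

end PartialApprox

/-! The least fixpoint `c↓(b)` of `A¹(·, b)` on `[⊥, b]` is also its least prefixpoint there,
and likewise for `c↑(a)` on `[a, ⊤]` (Knaster–Tarski on an interval). Then `c` is a prefixpoint
of `A¹(·, b)` because `A¹(c, b) ≤ A¹(c, d) = c`, giving `c↓(b) ≤ c`. For the other half, `d ⊓ c↑(a)`
is a prefixpoint of `A¹(·, d)`, through the diagonal `A¹(x, x) = A²(x, x) ≤ A²(a, c↑(a))`; so
`c ≤ c↑(a)`, which makes `c↑(a)` a prefixpoint of `A²(c, ·)` and hence `d = c↑(c) ≤ c↑(a)`. -/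

open Set

section IntervalFixpoint

variable {f : L → L} {lo hi : L}

theorem sInf_prefixed_Icc_mem (hlh : lo ≤ hi) (hhi : f hi ≤ hi) :
    sInf {z ∈ Icc lo hi | f z ≤ z} ∈ Icc lo hi :=
  ⟨le_sInf fun _ hz => hz.1.1, sInf_le ⟨⟨hlh, le_rfl⟩, hhi⟩⟩

theorem map_sInf_prefixed_Icc (hf : MonotoneOn f (Icc lo hi)) (hlo : lo ≤ f lo) (hlh : lo ≤ hi)
    (hhi : f hi ≤ hi) :
    f (sInf {z ∈ Icc lo hi | f z ≤ z}) = sInf {z ∈ Icc lo hi | f z ≤ z} := by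
  set u := sInf {z ∈ Icc lo hi | f z ≤ z}
  have hu : u ∈ Icc lo hi := sInf_prefixed_Icc_mem hlh hhi
  have hpre : f u ≤ u := le_sInf fun z hz => (hf hu hz.1 (sInf_le hz)).trans hz.2
  have hfu : f u ∈ Icc lo hi := ⟨hlo.trans (hf ⟨le_rfl, hlh⟩ hu hu.1), hpre.trans hu.2⟩
  exact le_antisymm hpre (sInf_le ⟨hfu, hf hfu hu hpre⟩)

theorem sInf_fixed_Icc_eq_sInf_prefixed (hf : MonotoneOn f (Icc lo hi)) (hlo : lo ≤ f lo)
    (hlh : lo ≤ hi) (hhi : f hi ≤ hi) :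
    sInf {z ∈ Icc lo hi | f z = z} = sInf {z ∈ Icc lo hi | f z ≤ z} :=
  le_antisymm (sInf_le ⟨sInf_prefixed_Icc_mem hlh hhi, map_sInf_prefixed_Icc hf hlo hlh hhi⟩)
    (sInf_le_sInf fun _ hz => ⟨hz.1, hz.2.le⟩)

end IntervalFixpoint

namespace PartialApprox

variable (A : PartialApprox L) {a b z : L}

theorem monotoneOn_A1_left (b : L) : MonotoneOn (A.A1 · b) (Icc ⊥ b) :=
  fun x hx y hy hxy => A.mono1 x b y b hx.2 hy.2 hxy le_rfl

theorem monotoneOn_A2_right (a : L) : MonotoneOn (A.A2 a) (Icc a ⊤) :=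
  fun x hx y hy hxy => A.mono2 a y a x hy.1 hx.1 le_rfl hxy

theorem cdown_eq_sInf_prefixed (hb : A.A1 b b ≤ b) :
    A.cdown b = sInf {z ∈ Icc ⊥ b | A.A1 z b ≤ z} := by
  rw [← sInf_fixed_Icc_eq_sInf_prefixed (A.monotoneOn_A1_left b) bot_le bot_le hb, cdown]
  simp only [mem_Icc, bot_le, true_and]

theorem cup_eq_sInf_prefixed (ha : a ≤ A.A2 a a) :
    A.cup a = sInf {z ∈ Icc a ⊤ | A.A2 a z ≤ z} := by
  rw [← sInf_fixed_Icc_eq_sInf_prefixed (A.monotoneOn_A2_right a) ha le_top le_top, cup]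
  simp only [mem_Icc, le_top, and_true]

theorem A1_cdown (hb : A.A1 b b ≤ b) : A.A1 (A.cdown b) b = A.cdown b := by
  rw [A.cdown_eq_sInf_prefixed hb]
  exact map_sInf_prefixed_Icc (A.monotoneOn_A1_left b) bot_le bot_le hb

theorem A2_cup (ha : a ≤ A.A2 a a) : A.A2 a (A.cup a) = A.cup a := by
  rw [A.cup_eq_sInf_prefixed ha]
  exact map_sInf_prefixed_Icc (A.monotoneOn_A2_right a) ha le_top le_top

theorem cdown_le (hb : A.A1 b b ≤ b) (hzb : z ≤ b) (hz : A.A1 z b ≤ z) : A.cdown b ≤ z := by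
  rw [A.cdown_eq_sInf_prefixed hb]
  exact sInf_le ⟨⟨bot_le, hzb⟩, hz⟩

theorem cup_le (ha : a ≤ A.A2 a a) (haz : a ≤ z) (hz : A.A2 a z ≤ z) : A.cup a ≤ z := by
  rw [A.cup_eq_sInf_prefixed ha]
  exact sInf_le ⟨⟨haz, le_top⟩, hz⟩

theorem le_cup (ha : a ≤ A.A2 a a) : a ≤ A.cup a := by
  rw [A.cup_eq_sInf_prefixed ha]
  exact (sInf_prefixed_Icc_mem le_top le_top).1

theorem cdown_le_of_A2_le {d q : L} (hd : A.A1 d d ≤ d) (had : a ≤ d) (haq : a ≤ q)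
    (hq : A.A2 a q ≤ q) : A.cdown d ≤ q := by
  have hadq : a ≤ d ⊓ q := le_inf had haq
  refine (A.cdown_le hd inf_le_left (le_inf ?_ ?_)).trans inf_le_right
  · exact (A.mono1 _ d d d inf_le_left le_rfl inf_le_left le_rfl).trans hd
  · calc A.A1 (d ⊓ q) d ≤ A.A1 (d ⊓ q) (d ⊓ q) :=
          A.mono1 _ d _ _ inf_le_left le_rfl le_rfl inf_le_left
      _ = A.A2 (d ⊓ q) (d ⊓ q) := A.diag _
      _ ≤ A.A2 a q := A.mono2 a q _ _ haq le_rfl hadq inf_le_right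
      _ ≤ q := hq

variable {A}

theorem reliable.A1_self_le (h : A.reliable a b) : A.A1 b b ≤ b :=
  calc A.A1 b b = A.A2 b b := A.diag b
    _ ≤ A.A2 a b := A.mono2 a b b b h.1 le_rfl h.1 le_rfl
    _ ≤ b := h.2.2

theorem reliable.le_A2_self (h : A.reliable a b) : a ≤ A.A2 a a :=
  calc a ≤ A.A1 a b := h.2.1
    _ ≤ A.A1 a a := A.mono1 a b a a h.1 le_rfl le_rfl h.1
    _ = A.A2 a a := A.diag a

end PartialApprox

theorem stmt10 (A : PartialApprox L) (a b c d : L)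
    (hcd : A.stableFix c d) (hab : A.reliable a b)
    (h1 : a ≤ c) (h2 : d ≤ b) :
    A.cdown b ≤ c ∧ d ≤ A.cup a := by
  obtain ⟨hcd, hc, hd⟩ := hcd
  have hdd : A.A1 d d ≤ d := hcd.A1_self_le
  have hcb : c ≤ b := hcd.1.trans h2
  constructor
  · refine A.cdown_le hab.A1_self_le hcb ?_
    calc A.A1 c b ≤ A.A1 c d := A.mono1 c b c d hcb hcd.1 le_rfl h2
      _ = c := by rw [hc]; exact A.A1_cdown hdd
  · have haa : a ≤ A.A2 a a := hab.le_A2_self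
    have hq : A.A2 a (A.cup a) = A.cup a := A.A2_cup haa
    have hcq : c ≤ A.cup a := by
      rw [hc]; exact A.cdown_le_of_A2_le hdd (h1.trans hcd.1) (A.le_cup haa) hq.le
    rw [hd]
    refine A.cup_le hcd.le_A2_self hcq ?_
    exact (A.mono2 a _ c _ (A.le_cup haa) hcq h1 le_rfl).trans hq.le
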